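/- arXiv:2605.16685 — 2 statements merged into one kernel-verified Lean document; each statement's English description precedes it below -/
import Mathlib

section
/- Let y* : ℝ^{d_x} → ℝ^{d_y} be L_y-Lipschitz, let μ > 0 and fix x ∈ ℝ^{d_x}. For v drawn uniformly from the unit sphere S^{d_x}, the finite-difference matrix H(v) = (d_x / 2μ)(y*(x + μ v) − y*(x − μ v)) vᵀ is an unbiased estimator of the Jacobian of the smoothed response: E_{v ~ U(S^{d_x})}[H(v)] = (d_x/μ) E_{v ~ U(S^{d_x})}[y*(x + μ v) vᵀ] = Jac y_μ(x). -/
open MeasureTheory Metric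
open scoped InnerProductSpace RealInnerProductSpace NNReal

noncomputable section

/-- `ℝ^n` with the Euclidean norm. -/
abbrev E (n : ℕ) : Type := EuclideanSpace ℝ (Fin n)

/-- Uniform (normalized Lebesgue) probability measure on the closed unit ball of `ℝ^n`. -/
def uniformBall (n : ℕ) : Measure (E n) :=
  (volume (closedBall (0 : E n) 1))⁻¹ • volume.restrict (closedBall (0 : E n) 1)

/-- Uniform (rotation-invariant) probability measure on the unit sphere of `ℝ^n`,
viewed as a measure on the ambient space. -/
def uniformSphere (n : ℕ) : Measure (E n) :=
  ((volume : Measure (E n)).toSphere Set.univ)⁻¹ •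
    Measure.map Subtype.val ((volume : Measure (E n)).toSphere)

/-- Ball smoothing `y_μ` of a map `y : ℝ^{d_x} → ℝ^{d_y}`:
`y_μ(x) = E_{u ~ U(B^{d_x})}[y(x + μ u)]`. -/
def ymu {dx dy : ℕ} (y : E dx → E dy) (μ : ℝ) (x : E dx) : E dy :=
  ∫ u, y (x + μ • u) ∂(uniformBall dx)

/-- Partial gradient `∇_x f` of `f : ℝ^{d_x} × ℝ^{d_y} → ℝ` in its first argument. -/
def gradx {dx dy : ℕ} (f : E dx × E dy → ℝ) (x : E dx) (y : E dy) : E dx :=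
  gradient (fun x' => f (x', y)) x

/-- Partial gradient `∇_y f` of `f : ℝ^{d_x} × ℝ^{d_y} → ℝ` in its second argument. -/
def grady {dx dy : ℕ} (f : E dx × E dy → ℝ) (x : E dx) (y : E dy) : E dy :=
  gradient (fun y' => f (x, y')) y

/-- Smoothed surrogate `F_μ(x) = f(x, y_μ(x))`. -/
def Fmu {dx dy : ℕ} (f : E dx × E dy → ℝ) (y : E dx → E dy) (μ : ℝ) (x : E dx) : ℝ :=
  f (x, ymu y μ x)

/-!
Let `σ = volume.toSphere` be the surface measure on the unit sphere `S`. In polar coordinates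
`closedBall a 1 = {r • v : v ∈ S, 0 < r ≤ exitRadius a v}`, where
`exitRadius a v = 1 + ⟪v, a⟫ + O(‖a‖²)`. Hence, for Lipschitz `z`,
`∫_{B(a,1)} z - ∫_{B(0,1)} z = ∫_S ⟪v, a⟫ z(v) dσ(v) + O(‖a‖²)`: the map
`a ↦ ∫_{B(0,1)} z(a + u) du` is differentiable with derivative `∫_S v ⊗ z(a + v) dσ(v)`, a
divergence theorem for balls. Rescaling by `μ` and `σ(S) = d_x vol(B)` give
`Jac y_μ(x) = (d_x / μ) E_v[y*(x + μ v) vᵀ]`, and since `σ` is invariant under `v ↦ -v`, the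
two-point estimator has the same mean.
-/

open Set

section Polar

variable {V : Type*} [NormedAddCommGroup V] [NormedSpace ℝ V] [FiniteDimensional ℝ V]
  [MeasurableSpace V] [BorelSpace V] {m : Measure V} [m.IsAddHaarMeasure]
  {F : Type*} [NormedAddCommGroup F]

theorem integral_volumeIoiPow [NormedSpace ℝ F] (k : ℕ) (f : ℝ → F) :
    ∫ r, f r ∂(Measure.volumeIoiPow k) = ∫ r in Ioi (0 : ℝ), r ^ k • f r := by
  rw [Measure.volumeIoiPow, integral_withDensity_eq_integral_toReal_smul
      (measurable_subtype_coe.pow_const k).ennreal_ofReal (by simp),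
    integral_subtype_comap measurableSet_Ioi (fun r => (ENNReal.ofReal (r ^ k)).toReal • f r)]
  refine setIntegral_congr_fun measurableSet_Ioi fun r hr => ?_
  rw [ENNReal.toReal_ofReal (pow_nonneg hr.le k)]

theorem integrable_toSphere_prod_volumeIoiPow {f : V → F} (hf : Integrable f m) :
    Integrable (fun p : sphere (0 : V) 1 × Ioi (0 : ℝ) => f (p.2.1 • (p.1 : V)))
      (m.toSphere.prod (Measure.volumeIoiPow (Module.finrank ℝ V - 1))) := by
  have hf' : Integrable (fun x : ({0}ᶜ : Set V) => f x) (m.comap Subtype.val) := by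
    refine (MeasurableEmbedding.subtype_coe
      (measurableSet_singleton 0).compl).integrable_map_iff.1 ?_
    rw [map_comap_subtype_coe (measurableSet_singleton 0).compl]
    exact hf.restrict
  rw [← (m.measurePreserving_homeomorphUnitSphereProd).integrable_comp_emb
      (Homeomorph.measurableEmbedding _)]
  convert hf' using 2 with x
  simp [homeomorphUnitSphereProd, smul_inv_smul₀ (norm_ne_zero_iff.2 x.2)]

theorem integrable_toSphere_of_continuous {f : V → F} (hf : Continuous f) :
    Integrable (fun v : sphere (0 : V) 1 => f v) m.toSphere :=
  integrableOn_univ.1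
    ((hf.comp continuous_subtype_val).continuousOn.integrableOn_compact isCompact_univ)

variable [NormedSpace ℝ F]

theorem integral_eq_integral_toSphere_radial [Nontrivial V] [CompleteSpace F] {f : V → F}
    (hf : Integrable f m) :
    ∫ u, f u ∂m = ∫ v, (∫ r in Ioi (0 : ℝ), r ^ (Module.finrank ℝ V - 1) • f (r • (v : V)))
      ∂m.toSphere := by
  calc ∫ u, f u ∂m = ∫ x : ({0}ᶜ : Set V), f x ∂(m.comap Subtype.val) := by
        rw [integral_subtype_comap (measurableSet_singleton 0).compl f, restrict_compl_singleton]
    _ = ∫ p : sphere (0 : V) 1 × Ioi (0 : ℝ), f (p.2.1 • (p.1 : V))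
          ∂(m.toSphere.prod (Measure.volumeIoiPow (Module.finrank ℝ V - 1))) := by
        rw [← (m.measurePreserving_homeomorphUnitSphereProd).integral_comp
          (Homeomorph.measurableEmbedding _)]
        congr with x
        simp [homeomorphUnitSphereProd, smul_inv_smul₀ (norm_ne_zero_iff.2 x.2)]
    _ = _ := by
        rw [integral_prod _ (integrable_toSphere_prod_volumeIoiPow hf)]
        congr with v
        exact integral_volumeIoiPow _ (fun r => f (r • (v : V)))

theorem integrable_toSphere_radial {f : V → F} (hf : Integrable f m) :
    Integrable (fun v : sphere (0 : V) 1 =>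
      ∫ r in Ioi (0 : ℝ), r ^ (Module.finrank ℝ V - 1) • f (r • (v : V))) m.toSphere :=
  (integrable_toSphere_prod_volumeIoiPow hf).integral_prod_left.congr
    (ae_of_all _ fun v => integral_volumeIoiPow _ (fun r => f (r • (v : V))))

theorem MeasureTheory.Measure.map_neg_toSphere : m.toSphere.map Neg.neg = m.toSphere := by
  ext s hs
  rw [Measure.map_apply continuous_neg.measurable hs,
    m.toSphere_apply' (continuous_neg.measurable hs), m.toSphere_apply' hs]
  have himage : ((↑) : sphere (0 : V) 1 → V) '' (Neg.neg ⁻¹' s) = -((↑) '' s) := by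
    ext u
    simp only [mem_image, mem_preimage, mem_neg]
    constructor
    · rintro ⟨w, hw, rfl⟩; exact ⟨-w, hw, by simp⟩
    · rintro ⟨w, hw, hwu⟩; exact ⟨-w, by simpa using hw, by rw [coe_neg_sphere, hwu, neg_neg]⟩
  rw [himage, Set.smul_neg, Measure.measure_neg]

theorem integral_toSphere_comp_neg (f : V → F) :
    ∫ v, f (-(v : V)) ∂m.toSphere = ∫ v, f v ∂m.toSphere := by
  have h := (Homeomorph.neg (sphere (0 : V) 1)).measurableEmbedding.integral_map
    (μ := m.toSphere) (fun v => f v)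
  rw [Homeomorph.coe_neg, m.map_neg_toSphere] at h
  exact h.symm

end Polar

section ExitRadius

variable {V : Type*} [NormedAddCommGroup V] [InnerProductSpace ℝ V]

/-- For `‖v‖ = 1` and `‖a‖ ≤ 1`, the larger root `r` of `‖r • v - a‖ = 1`. -/
def exitRadius (a v : V) : ℝ := ⟪v, a⟫ + √(1 - ‖a‖ ^ 2 + ⟪v, a⟫ ^ 2)

@[simp]
theorem exitRadius_zero_left (v : V) : exitRadius 0 v = 1 := by
  simp [exitRadius]

variable {a v : V}

theorem abs_inner_le_norm_of_norm_eq_one (hv : ‖v‖ = 1) : |⟪v, a⟫| ≤ ‖a‖ := by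
  simpa [hv] using abs_real_inner_le_norm v a

theorem smul_mem_closedBall_iff_le_exitRadius (hv : ‖v‖ = 1) (ha : ‖a‖ ≤ 1) {r : ℝ}
    (hr : 0 < r) : r • v ∈ closedBall a 1 ↔ r ≤ exitRadius a v := by
  set b := ⟪v, a⟫
  have hb := abs_le.1 (abs_inner_le_norm_of_norm_eq_one (a := a) hv)
  have hX : 0 ≤ 1 - ‖a‖ ^ 2 + b ^ 2 := by nlinarith [norm_nonneg a]
  have hs := Real.sq_sqrt hX
  have hs0 := Real.sqrt_nonneg (1 - ‖a‖ ^ 2 + b ^ 2)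
  have hnorm : ‖r • v - a‖ ^ 2 = (r - b) ^ 2 + 1 - (1 - ‖a‖ ^ 2 + b ^ 2) := by
    rw [norm_sub_sq_real, norm_smul, real_inner_smul_left, Real.norm_eq_abs, abs_of_pos hr, hv]
    ring
  rw [mem_closedBall, dist_eq_norm, ← sq_le_one_iff₀ (norm_nonneg _), hnorm, exitRadius]
  constructor
  · intro h
    nlinarith [Real.abs_le_sqrt (show (r - b) ^ 2 ≤ 1 - ‖a‖ ^ 2 + b ^ 2 by linarith),
      le_abs_self (r - b)]
  · intro h
    have hbs : b ≤ √(1 - ‖a‖ ^ 2 + b ^ 2) := by nlinarith [norm_nonneg a]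
    nlinarith

theorem abs_exitRadius_sub_one_sub_inner_le (hv : ‖v‖ = 1) (ha : ‖a‖ ≤ 1) :
    |exitRadius a v - 1 - ⟪v, a⟫| ≤ ‖a‖ ^ 2 := by
  set b := ⟪v, a⟫
  have hb := abs_le.1 (abs_inner_le_norm_of_norm_eq_one (a := a) hv)
  have hX : 0 ≤ 1 - ‖a‖ ^ 2 + b ^ 2 := by nlinarith [norm_nonneg a]
  have hs := Real.sq_sqrt hX
  have hs0 := Real.sqrt_nonneg (1 - ‖a‖ ^ 2 + b ^ 2)
  have hs1 : √(1 - ‖a‖ ^ 2 + b ^ 2) ≤ 1 := by nlinarith [norm_nonneg a]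
  rw [exitRadius, abs_le]
  constructor <;> nlinarith [norm_nonneg a]

theorem abs_exitRadius_sub_one_le (hv : ‖v‖ = 1) (ha : ‖a‖ ≤ 1) :
    |exitRadius a v - 1| ≤ 2 * ‖a‖ := by
  have h := abs_exitRadius_sub_one_sub_inner_le hv ha
  have hb := abs_inner_le_norm_of_norm_eq_one (a := a) hv
  calc |exitRadius a v - 1| ≤ |exitRadius a v - 1 - ⟪v, a⟫| + |⟪v, a⟫| := by
        simpa using abs_add_le (exitRadius a v - 1 - ⟪v, a⟫) ⟪v, a⟫
    _ ≤ 2 * ‖a‖ := by nlinarith [norm_nonneg a]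

theorem setIntegral_Ioi_indicator_closedBall {F : Type*} [NormedAddCommGroup F] [NormedSpace ℝ F]
    (hv : ‖v‖ = 1) (ha : ‖a‖ ≤ 1) (k : ℕ) (z : V → F) :
    ∫ r in Ioi (0 : ℝ), r ^ k • (closedBall a 1).indicator z (r • v)
      = ∫ r in Ioc 0 (exitRadius a v), r ^ k • z (r • v) := by
  have hmeas : MeasurableSet {r : ℝ | r • v ∈ closedBall a 1} :=
    (isClosed_closedBall.preimage (continuous_id.smul continuous_const)).measurableSet
  have hset : Ioi 0 ∩ {r : ℝ | r • v ∈ closedBall a 1} = Ioc 0 (exitRadius a v) := by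
    ext r
    simp only [mem_inter_iff, mem_Ioi, mem_ofPred_eq, mem_Ioc]
    exact and_congr_right fun hr => smul_mem_closedBall_iff_le_exitRadius hv ha hr
  rw [← hset, ← setIntegral_indicator hmeas]
  congr with r
  by_cases hr : r • v ∈ closedBall a 1
  · rw [indicator_of_mem hr, indicator_of_mem (show r ∈ {r : ℝ | r • v ∈ closedBall a 1} from hr)]
  · rw [indicator_of_notMem hr, smul_zero,
      indicator_of_notMem (show r ∉ {r : ℝ | r • v ∈ closedBall a 1} from hr)]

end ExitRadius

section BallPolar

variable {V : Type*} [NormedAddCommGroup V] [InnerProductSpace ℝ V] [FiniteDimensional ℝ V]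
  [MeasurableSpace V] [BorelSpace V] {m : Measure V} [m.IsAddHaarMeasure]
  {F : Type*} [NormedAddCommGroup F] [NormedSpace ℝ F] {a : V}

theorem setIntegral_closedBall_eq_integral_toSphere [Nontrivial V] [CompleteSpace F]
    (ha : ‖a‖ ≤ 1) {z : V → F} (hz : IntegrableOn z (closedBall a 1) m) :
    ∫ u in closedBall a 1, z u ∂m = ∫ v, (∫ r in Ioc 0 (exitRadius a v),
      r ^ (Module.finrank ℝ V - 1) • z (r • (v : V))) ∂m.toSphere := by
  rw [← integral_indicator measurableSet_closedBall,
    integral_eq_integral_toSphere_radial (hz.integrable_indicator measurableSet_closedBall)]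
  congr with v
  exact setIntegral_Ioi_indicator_closedBall (mem_sphere_zero_iff_norm.1 v.2) ha _ z

theorem integrable_toSphere_exitRadius (ha : ‖a‖ ≤ 1) {z : V → F}
    (hz : IntegrableOn z (closedBall a 1) m) :
    Integrable (fun v : sphere (0 : V) 1 => ∫ r in Ioc 0 (exitRadius a v),
      r ^ (Module.finrank ℝ V - 1) • z (r • (v : V))) m.toSphere :=
  (integrable_toSphere_radial (hz.integrable_indicator measurableSet_closedBall)).congr
    (ae_of_all _ fun v =>
      setIntegral_Ioi_indicator_closedBall (mem_sphere_zero_iff_norm.1 v.2) ha _ z)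

end BallPolar

theorem norm_intervalIntegral_sub_smul_le {F : Type*} [NormedAddCommGroup F] [NormedSpace ℝ F]
    [CompleteSpace F] {g : ℝ → F} {c ρ K : ℝ} (hg : IntervalIntegrable g volume c ρ)
    (hK0 : 0 ≤ K) (hK : ∀ r ∈ uIoc c ρ, ‖g r - g c‖ ≤ K * |r - c|) :
    ‖(∫ r in c..ρ, g r) - (ρ - c) • g c‖ ≤ K * |ρ - c| ^ 2 := by
  have hsub : (∫ r in c..ρ, g r) - (ρ - c) • g c = ∫ r in c..ρ, (g r - g c) := by
    rw [intervalIntegral.integral_sub hg intervalIntegrable_const, intervalIntegral.integral_const]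
  rw [hsub, sq, ← mul_assoc]
  refine intervalIntegral.norm_integral_le_of_norm_le_const fun r hr => (hK r hr).trans ?_
  have hdist : |r - c| ≤ |ρ - c| := by
    rcases mem_uIoc.1 hr with ⟨h1, h2⟩ | ⟨h1, h2⟩
    · rw [abs_of_pos (by linarith), abs_of_pos (by linarith)]; linarith
    · rw [abs_of_nonpos (by linarith), abs_of_neg (by linarith)]; linarith
  exact mul_le_mul_of_nonneg_left hdist hK0

section RadialProfile

variable {V F : Type*} [NormedAddCommGroup V] [NormedAddCommGroup F] {z : V → F} {L : ℝ≥0} {v : V}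

theorem LipschitzWith.norm_le_of_norm_eq_one (hz : LipschitzWith L z) (hv : ‖v‖ = 1) :
    ‖z v‖ ≤ ‖z 0‖ + L := by
  have h := hz.dist_le_mul v 0
  rw [dist_eq_norm, dist_zero_right, hv, mul_one] at h
  linarith [norm_le_insert' (z v) (z 0)]

theorem LipschitzWith.norm_pow_smul_comp_smul_sub_le [NormedSpace ℝ V] [NormedSpace ℝ F]
    (hz : LipschitzWith L z) (hv : ‖v‖ = 1) (k : ℕ) {r : ℝ} (hr0 : 0 ≤ r) (hr2 : r ≤ 2) :
    ‖r ^ k • z (r • v) - z v‖ ≤ 2 ^ k * (L + k * (‖z 0‖ + L)) * |r - 1| := by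
  have hrk : |r ^ k| ≤ 2 ^ k := by
    rw [abs_of_nonneg (by positivity)]; exact pow_le_pow_left₀ hr0 hr2 k
  have hzr : ‖z (r • v) - z v‖ ≤ L * |r - 1| := by
    have h := hz.dist_le_mul (r • v) v
    rwa [dist_eq_norm, dist_eq_norm, show r • v - v = (r - 1) • v by rw [sub_smul, one_smul],
      norm_smul, hv, mul_one, Real.norm_eq_abs] at h
  have hpow : |r ^ k - 1| ≤ |r - 1| * k * 2 ^ k := by
    calc |r ^ k - 1| = |r ^ k - 1 ^ k| := by rw [one_pow]
      _ ≤ |r - 1| * k * max |r| |1| ^ (k - 1) := abs_pow_sub_pow_le r 1 k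
      _ ≤ |r - 1| * k * 2 ^ k := by
          gcongr
          calc max |r| |1| ^ (k - 1) ≤ 2 ^ (k - 1) := by
                gcongr; rw [abs_one, abs_of_nonneg hr0]; exact max_le hr2 one_le_two
            _ ≤ 2 ^ k := pow_le_pow_right₀ one_le_two (Nat.sub_le k 1)
  have hzv := hz.norm_le_of_norm_eq_one hv
  calc ‖r ^ k • z (r • v) - z v‖ = ‖r ^ k • (z (r • v) - z v) + (r ^ k - 1) • z v‖ := by
        congr 1; module
    _ ≤ |r ^ k| * ‖z (r • v) - z v‖ + |r ^ k - 1| * ‖z v‖ := by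
        refine (norm_add_le _ _).trans_eq ?_
        rw [norm_smul, norm_smul, Real.norm_eq_abs, Real.norm_eq_abs]
    _ ≤ 2 ^ k * (L * |r - 1|) + (|r - 1| * k * 2 ^ k) * (‖z 0‖ + L) := by
        gcongr
    _ = 2 ^ k * (L + k * (‖z 0‖ + L)) * |r - 1| := by ring

end RadialProfile

theorem LipschitzWith.norm_setIntegral_Ioc_exitRadius_sub_le {V F : Type*}
    [NormedAddCommGroup V] [InnerProductSpace ℝ V] [NormedAddCommGroup F] [NormedSpace ℝ F]
    [CompleteSpace F] {z : V → F} {L : ℝ≥0} (hz : LipschitzWith L z) {v a : V}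
    (hv : ‖v‖ = 1) (ha : ‖a‖ ≤ 1 / 2) (k : ℕ) :
    ‖(∫ r in Ioc 0 (exitRadius a v), r ^ k • z (r • v)) - (∫ r in Ioc (0 : ℝ) 1, r ^ k • z (r • v))
        - ⟪v, a⟫ • z v‖
      ≤ (‖z 0‖ + L + 4 * (2 ^ k * (L + k * (‖z 0‖ + L)))) * ‖a‖ ^ 2 := by
  set ρ := exitRadius a v
  set K : ℝ := 2 ^ k * (L + k * (‖z 0‖ + L))
  set g : ℝ → F := fun r => r ^ k • z (r • v)
  have ha1 : ‖a‖ ≤ 1 := by linarith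
  have hρ := abs_exitRadius_sub_one_le hv ha1
  have hρ' := abs_le.1 hρ
  have hρ0 : 0 ≤ ρ := by linarith
  have hg : Continuous g :=
    (continuous_pow k).smul (hz.continuous.comp (continuous_id.smul continuous_const))
  have hgK : ∀ r ∈ uIoc 1 ρ, ‖g r - g 1‖ ≤ K * |r - 1| := fun r hr => by
    have hr' : 0 ≤ r ∧ r ≤ 2 := by
      rcases mem_uIoc.1 hr with ⟨h1, h2⟩ | ⟨h1, h2⟩ <;> constructor <;> linarith
    simpa [g] using hz.norm_pow_smul_comp_smul_sub_le hv k hr'.1 hr'.2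
  have hK0 : 0 ≤ K := by positivity
  rw [← intervalIntegral.integral_of_le hρ0, ← intervalIntegral.integral_of_le zero_le_one,
    intervalIntegral.integral_interval_sub_left (hg.intervalIntegrable 0 ρ)
      (hg.intervalIntegrable 0 1)]
  have hsplit : (∫ r in (1 : ℝ)..ρ, g r) - ⟪v, a⟫ • z v
      = ((∫ r in (1 : ℝ)..ρ, g r) - (ρ - 1) • g 1) + (ρ - 1 - ⟪v, a⟫) • z v := by
    simp only [g, one_pow, one_smul]; module
  rw [hsplit]
  calc _ ≤ ‖(∫ r in (1 : ℝ)..ρ, g r) - (ρ - 1) • g 1‖ + ‖(ρ - 1 - ⟪v, a⟫) • z v‖ := norm_add_le _ _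
    _ ≤ K * |ρ - 1| ^ 2 + ‖a‖ ^ 2 * (‖z 0‖ + L) := by
        gcongr
        · exact norm_intervalIntegral_sub_smul_le (hg.intervalIntegrable 1 ρ) hK0 hgK
        · rw [norm_smul, Real.norm_eq_abs]
          exact mul_le_mul (abs_exitRadius_sub_one_sub_inner_le hv ha1)
            (hz.norm_le_of_norm_eq_one hv) (norm_nonneg _) (sq_nonneg _)
    _ ≤ K * (2 * ‖a‖) ^ 2 + ‖a‖ ^ 2 * (‖z 0‖ + L) := by
        gcongr
    _ = (‖z 0‖ + L + 4 * K) * ‖a‖ ^ 2 := by ring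

theorem setIntegral_closedBall_comp_add {G F : Type*} [NormedAddCommGroup G] [MeasurableSpace G]
    [BorelSpace G] {m : Measure G} [m.IsAddLeftInvariant] [NormedAddCommGroup F]
    [NormedSpace ℝ F] (w : G → F) (a : G) (r : ℝ) :
    ∫ u in closedBall (0 : G) r, w (a + u) ∂m = ∫ u in closedBall a r, w u ∂m := by
  have h := (measurePreserving_add_left m a).setIntegral_preimage_emb
    (measurableEmbedding_addLeft a) w (closedBall a r)
  rwa [preimage_add_closedBall, sub_self] at h

theorem continuous_innerSL_smulRight {V F : Type*} [NormedAddCommGroup V] [InnerProductSpace ℝ V]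
    [NormedAddCommGroup F] [NormedSpace ℝ F] {f : V → F} (hf : Continuous f) :
    Continuous fun u => (innerSL ℝ u).smulRight (f u) :=
  (ContinuousLinearMap.smulRightL ℝ V F).continuous₂.comp ((innerSL ℝ).continuous.prodMk hf)

section BallDerivative

open Asymptotics Filter Topology

variable {V : Type*} [NormedAddCommGroup V] [InnerProductSpace ℝ V] [FiniteDimensional ℝ V]
  [MeasurableSpace V] [BorelSpace V] {m : Measure V} [m.IsAddHaarMeasure]
  {F : Type*} [NormedAddCommGroup F] [NormedSpace ℝ F] [CompleteSpace F]
  {z : V → F} {L : ℝ≥0}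

theorem LipschitzWith.isBigO_setIntegral_closedBall_sub [Nontrivial V] (hz : LipschitzWith L z) :
    (fun a => (∫ u in closedBall a 1, z u ∂m) - (∫ u in closedBall 0 1, z u ∂m)
      - (∫ v, (innerSL ℝ (v : V)).smulRight (z v) ∂m.toSphere) a) =O[𝓝 0] fun a => ‖a‖ ^ 2 := by
  set k := Module.finrank ℝ V - 1
  set C := ‖z 0‖ + L + 4 * (2 ^ k * (L + k * (‖z 0‖ + L)))
  have hzint : ∀ a : V, IntegrableOn z (closedBall a 1) m := fun a =>
    hz.continuous.continuousOn.integrableOn_compact (isCompact_closedBall a 1)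
  refine IsBigO.of_bound (C * m.toSphere.real univ) ?_
  filter_upwards [closedBall_mem_nhds (0 : V) one_half_pos] with a ha
  rw [mem_closedBall_zero_iff] at ha
  have hzero := setIntegral_closedBall_eq_integral_toSphere (m := m)
    (norm_zero.trans_le zero_le_one) (hzint 0)
  simp only [exitRadius_zero_left] at hzero
  rw [setIntegral_closedBall_eq_integral_toSphere (ha.trans one_half_lt_one.le) (hzint a), hzero,
    ContinuousLinearMap.integral_apply (integrable_toSphere_of_continuous
      (continuous_innerSL_smulRight hz.continuous)) a]
  simp only [ContinuousLinearMap.smulRight_apply, innerSL_apply_apply]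
  have hint_a := integrable_toSphere_exitRadius (m := m) (ha.trans one_half_lt_one.le) (hzint a)
  have hint_0 := integrable_toSphere_exitRadius (m := m) (norm_zero.trans_le zero_le_one) (hzint 0)
  simp only [exitRadius_zero_left] at hint_0
  have hsub := integral_sub (hint_a.sub hint_0) (integrable_toSphere_of_continuous
    (f := fun u => ⟪u, a⟫ • z u) ((continuous_id.inner continuous_const).smul hz.continuous))
  simp only [Pi.sub_apply] at hsub
  rw [← integral_sub hint_a hint_0, ← hsub, norm_pow, norm_norm, mul_right_comm]
  exact norm_integral_le_of_norm_le_const (ae_of_all _ fun v =>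
    hz.norm_setIntegral_Ioc_exitRadius_sub_le (mem_sphere_zero_iff_norm.1 v.2) ha k)

theorem LipschitzWith.hasFDerivAt_setIntegral_closedBall_add [Nontrivial V]
    (hz : LipschitzWith L z) (x : V) :
    HasFDerivAt (fun a => ∫ u in closedBall (0 : V) 1, z (a + u) ∂m)
      (∫ v, (innerSL ℝ (v : V)).smulRight (z (x + v)) ∂m.toSphere) x := by
  have hzx : LipschitzWith L fun u => z (x + u) := by
    simpa [Function.comp_def] using hz.comp (isometry_add_left x).lipschitz
  rw [hasFDerivAt_iff_isLittleO_nhds_zero]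
  refine ((hzx.isBigO_setIntegral_closedBall_sub (m := m)).trans_isLittleO
    (isLittleO_norm_pow_id one_lt_two)).congr_left fun h => ?_
  rw [← setIntegral_closedBall_comp_add (fun u => z (x + u)) h 1]
  simp only [add_assoc]

end BallDerivative

section Smoothing

variable {d : ℕ} {F : Type*} [NormedAddCommGroup F]

theorem integrable_uniformSphere_of_continuous [NeZero d] {f : E d → F} (hf : Continuous f) :
    Integrable f (uniformSphere d) := by
  refine Integrable.smul_measure ?_
    (by simp [NeZero.ne d, (measure_ball_pos volume (0 : E d) one_pos).ne'])
  exact (MeasurableEmbedding.subtype_coe isClosed_sphere.measurableSet).integrable_map_iff.2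
    (integrable_toSphere_of_continuous hf)

variable [NormedSpace ℝ F]

theorem integral_uniformBall (f : E d → F) :
    ∫ u, f u ∂uniformBall d
      = (volume.real (closedBall (0 : E d) 1))⁻¹ • ∫ u in closedBall 0 1, f u := by
  rw [uniformBall, integral_smul_measure, ENNReal.toReal_inv, measureReal_def]

theorem integral_uniformSphere (f : E d → F) :
    ∫ v, f v ∂uniformSphere d
      = ((d : ℝ) * volume.real (ball (0 : E d) 1))⁻¹ •
          ∫ v, f v ∂(volume : Measure (E d)).toSphere := by
  rw [uniformSphere, integral_smul_measure, ENNReal.toReal_inv, ← measureReal_def,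
    Measure.toSphere_real_apply_univ, finrank_euclideanSpace_fin,
    (MeasurableEmbedding.subtype_coe isClosed_sphere.measurableSet).integral_map]

theorem integral_uniformSphere_comp_neg (f : E d → F) :
    ∫ v, f (-v) ∂uniformSphere d = ∫ v, f v ∂uniformSphere d := by
  rw [integral_uniformSphere, integral_uniformSphere, integral_toSphere_comp_neg]

theorem uniformSphere_eq_zero (hd : d = 0) : uniformSphere d = 0 := by
  rw [uniformSphere, (Measure.toSphere_eq_zero_iff_finrank _).2
    (by rw [finrank_euclideanSpace_fin, hd]), Measure.map_zero, smul_zero]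

theorem integral_uniformSphere_smulRight_sub [NeZero d] {e : ℕ} {y : E d → E e}
    (hy : Continuous y) (x : E d) (μ : ℝ) :
    ∫ v, (innerSL ℝ v).smulRight (y (x + μ • v) - y (x - μ • v)) ∂uniformSphere d
      = (2 : ℝ) • ∫ v, (innerSL ℝ v).smulRight (y (x + μ • v)) ∂uniformSphere d := by
  set Φ : E d → E d →L[ℝ] E e := fun v => (innerSL ℝ v).smulRight (y (x + μ • v))
  have hΦ : Continuous Φ :=
    continuous_innerSL_smulRight (hy.comp (continuous_const.add (continuous_id.const_smul μ)))
  have hodd : ∀ v : E d,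
      (innerSL ℝ v).smulRight (y (x + μ • v) - y (x - μ • v)) = Φ v + Φ (-v) := fun v => by
    ext w
    simp [Φ, sub_eq_add_neg, smul_add]
  simp only [hodd]
  rw [integral_add (integrable_uniformSphere_of_continuous hΦ)
      (integrable_uniformSphere_of_continuous (f := fun v => Φ (-v)) (hΦ.comp continuous_neg)),
    integral_uniformSphere_comp_neg Φ]
  exact (two_smul ℝ _).symm

theorem LipschitzWith.hasFDerivAt_ymu [NeZero d] {e : ℕ} {y : E d → E e} {L : ℝ≥0}
    (hy : LipschitzWith L y) {μ : ℝ} (hμ : μ ≠ 0) (x : E d) :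
    HasFDerivAt (ymu y μ) (((volume.real (ball (0 : E d) 1))⁻¹ * μ⁻¹) •
      ∫ v, (innerSL ℝ (v : E d)).smulRight (y (x + μ • v))
        ∂(volume : Measure (E d)).toSphere) x := by
  set z : E d → E e := fun w => y (μ • w)
  have hz : LipschitzWith (L * ‖μ‖₊) z := hy.comp (lipschitzWith_smul μ)
  have hscale : HasFDerivAt (fun x' : E d => μ⁻¹ • x') (μ⁻¹ • ContinuousLinearMap.id ℝ (E d)) x :=
    (hasFDerivAt_id x).const_smul μ⁻¹
  have hG := (hz.hasFDerivAt_setIntegral_closedBall_add (m := volume) (μ⁻¹ • x)).comp x hscale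
  have hymu : ymu y μ = (volume.real (ball (0 : E d) 1))⁻¹ •
      ((fun a => ∫ u in closedBall (0 : E d) 1, z (a + u)) ∘ fun x' => μ⁻¹ • x') := by
    ext1 x'
    simp only [ymu, integral_uniformBall, measureReal_def,
      Measure.addHaar_closedBall_eq_addHaar_ball, Pi.smul_apply, Function.comp_apply, z, smul_add,
      smul_inv_smul₀ hμ]
  rw [hymu]
  refine (hG.const_smul _).congr_fderiv ?_
  rw [ContinuousLinearMap.comp_smul, ContinuousLinearMap.comp_id, smul_smul]
  simp only [z, smul_add, smul_inv_smul₀ hμ]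

end Smoothing

/-- the two-point finite-difference matrix
`H(v) = (d_x/2μ)(y*(x+μv) − y*(x−μv)) vᵀ` (as a linear map, `w ↦ (d_x/2μ)⟪v,w⟫ • (…)`)
is an unbiased estimator of the Jacobian of the smoothed response:
`E_v[H(v)] = (d_x/μ) E_v[y*(x+μv) vᵀ] = Jac y_μ(x)`. -/
theorem stmt8 (dx dy : ℕ) (ystar : E dx → E dy) (Ly : ℝ≥0)
    (hLip : LipschitzWith Ly ystar) (μ : ℝ) (hμ : 0 < μ) (x : E dx) :
    (∫ v, (((dx : ℝ) / (2 * μ)) •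
        ((innerSL ℝ v).smulRight (ystar (x + μ • v) - ystar (x - μ • v))))
        ∂(uniformSphere dx))
      = ((dx : ℝ) / μ) •
          ∫ v, (innerSL ℝ v).smulRight (ystar (x + μ • v)) ∂(uniformSphere dx) ∧
    (∫ v, (((dx : ℝ) / (2 * μ)) •
        ((innerSL ℝ v).smulRight (ystar (x + μ • v) - ystar (x - μ • v))))
        ∂(uniformSphere dx))
      = fderiv ℝ (ymu ystar μ) x := by
  obtain hdx | hdx := eq_or_ne dx 0
  · simp only [uniformSphere_eq_zero hdx, integral_zero_measure]
    refine ⟨(ContinuousLinearMap.ext fun w => by rw [smul_apply, zero_apply, smul_zero]).symm, ?_⟩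
    have : Subsingleton (E dx) := by subst hdx; infer_instance
    exact Subsingleton.elim _ _
  have : NeZero dx := ⟨hdx⟩
  have hmean : ∫ v, ((dx : ℝ) / (2 * μ)) •
        (innerSL ℝ v).smulRight (ystar (x + μ • v) - ystar (x - μ • v)) ∂uniformSphere dx
      = ((dx : ℝ) / μ) • ∫ v, (innerSL ℝ v).smulRight (ystar (x + μ • v)) ∂uniformSphere dx := by
    rw [integral_smul, integral_uniformSphere_smulRight_sub hLip.continuous, smul_smul]
    congr 1
    field_simp
  refine ⟨hmean, ?_⟩
  rw [hmean, (hLip.hasFDerivAt_ymu hμ.ne' x).fderiv, integral_uniformSphere, smul_smul]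
  congr 1
  field_simp
end
end

section
/- Let f : ℝ^{d_x} × ℝ^{d_y} → ℝ be differentiable with L_g-Lipschitz gradient, and let y* : ℝ^{d_x} → ℝ^{d_y} be L_y-Lipschitz. Let μ > 0, F_μ(x) = f(x, y_μ(x)), and define ḡ(x) = ∇_x f(x, y*(x)) + Jac y_μ(x)ᵀ ∇_y f(x, y*(x)). Then for all x ∈ ℝ^{d_x}, ‖ḡ(x) − ∇F_μ(x)‖ ≤ L_g (1 + L_y) L_y μ. -/
open MeasureTheory Metric
open scoped InnerProductSpace RealInnerProductSpace NNReal

noncomputable section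

/-!
With `J = Jac y_μ(x)`, both `ḡ(x)` and `∇F_μ(x)` are Riesz representatives of functionals
`v ↦ Df(x, y)(v, J v)`, at `y = y*(x)` and at `y = y_μ(x)` respectively. Their difference is
therefore bounded by `‖Df(x, y*(x)) - Df(x, y_μ(x))‖ ‖(id, J)‖ ≤ L_g ‖y*(x) - y_μ(x)‖ (1 + L_y)`,
and `‖y*(x) - y_μ(x)‖ ≤ L_y μ` because `y_μ(x)` averages `y*` over the ball of radius `μ`.

What needs work is that `y_μ` is differentiable at all. Translating the unit ball by `a` changes it
only inside a shell of width `‖a‖`, so the second differences of `y_μ` are `O(‖h‖²)`; and a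
Lipschitz map with second differences `O(‖h‖²)` is differentiable, its derivative at `x` being the
limit of the dyadic difference quotients `2ᵏ (F (x + 2⁻ᵏ h) - F x)`.
-/

theorem LipschitzWith.norm_secondDiff_le {X Y : Type*} [NormedAddCommGroup X]
    [NormedAddCommGroup Y] {F : X → Y} {L : ℝ≥0} (hF : LipschitzWith L F)
    (z h : X) : ‖F (z + h) + F (z - h) - 2 • F z‖ ≤ 2 * L * ‖h‖ := by
  have hplus := hF.dist_le_mul (z + h) z
  have hminus := hF.dist_le_mul (z - h) z
  rw [dist_eq_norm, dist_eq_norm, add_sub_cancel_left] at hplus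
  rw [dist_eq_norm, dist_eq_norm, sub_sub_cancel_left, norm_neg] at hminus
  calc ‖F (z + h) + F (z - h) - 2 • F z‖ = ‖(F (z + h) - F z) + (F (z - h) - F z)‖ := by
        rw [two_smul]; congr 1; abel
    _ ≤ 2 * L * ‖h‖ := (norm_add_le _ _).trans (by linarith)

section SecondDifference

open Filter Asymptotics Topology

variable {X Y : Type*} [NormedAddCommGroup X] [NormedSpace ℝ X] [NormedAddCommGroup Y]

theorem norm_mixedDiff_le {F : X → Y} {C : ℝ}
    (hC : ∀ z h, ‖F (z + h) + F (z - h) - 2 • F z‖ ≤ C * ‖h‖ ^ 2) (z s t : X) :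
    ‖F (z + (s + t)) - F (z + s) - F (z + t) + F z‖ ≤ C / 4 * (‖s + t‖ ^ 2 + ‖s - t‖ ^ 2) := by
  -- both halves of the mixed difference are second differences centred at the midpoint `m`
  set m := z + (2 : ℝ)⁻¹ • (s + t)
  have h₁ := hC m ((2 : ℝ)⁻¹ • (s + t))
  have h₂ := hC m ((2 : ℝ)⁻¹ • (s - t))
  rw [show m + (2 : ℝ)⁻¹ • (s + t) = z + (s + t) by module,
    show m - (2 : ℝ)⁻¹ • (s + t) = z by module] at h₁
  rw [show m + (2 : ℝ)⁻¹ • (s - t) = z + s by module,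
    show m - (2 : ℝ)⁻¹ • (s - t) = z + t by module] at h₂
  rw [norm_smul, mul_pow] at h₁ h₂
  calc ‖F (z + (s + t)) - F (z + s) - F (z + t) + F z‖
      = ‖(F (z + (s + t)) + F z - 2 • F m) - (F (z + s) + F (z + t) - 2 • F m)‖ := by
        congr 1; abel
    _ ≤ _ := (norm_sub_le _ _).trans (add_le_add h₁ h₂)
    _ = _ := by norm_num; ring

variable [NormedSpace ℝ Y]

def dyadicDiffQuot (F : X → Y) (x h : X) (k : ℕ) : Y :=
  (2 : ℝ) ^ k • (F (x + ((2 : ℝ) ^ k)⁻¹ • h) - F x)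

theorem dist_dyadicDiffQuot_succ_le {F : X → Y} {C : ℝ}
    (hC : ∀ z h, ‖F (z + h) + F (z - h) - 2 • F z‖ ≤ C * ‖h‖ ^ 2) (x h : X) (k : ℕ) :
    dist (dyadicDiffQuot F x h k) (dyadicDiffQuot F x h (k + 1))
      ≤ C * ‖h‖ ^ 2 / 4 * (1 / 2) ^ k := by
  set s := ((2 : ℝ) ^ (k + 1))⁻¹ • h
  have hs := hC (x + s) s
  rw [show x + s + s = x + ((2 : ℝ) ^ k)⁻¹ • h by simp only [s]; module, add_sub_cancel_right,
    norm_smul, mul_pow] at hs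
  have hsplit : dyadicDiffQuot F x h k - dyadicDiffQuot F x h (k + 1)
      = (2 : ℝ) ^ k • (F (x + ((2 : ℝ) ^ k)⁻¹ • h) + F x - 2 • F (x + s)) := by
    simp only [dyadicDiffQuot, s]; module
  rw [dist_eq_norm, hsplit, norm_smul]
  calc _ ≤ ‖(2 : ℝ) ^ k‖ * (C * (‖((2 : ℝ) ^ (k + 1))⁻¹‖ ^ 2 * ‖h‖ ^ 2)) := by gcongr
    _ = _ := by
      simp only [norm_inv, norm_pow, Real.norm_ofNat, one_div, inv_pow]
      field_simp
      ring

theorem norm_dyadicDiffQuot_add_sub_le {F : X → Y} {C : ℝ}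
    (hC : ∀ z h, ‖F (z + h) + F (z - h) - 2 • F z‖ ≤ C * ‖h‖ ^ 2) (x h₁ h₂ : X) (k : ℕ) :
    ‖dyadicDiffQuot F x (h₁ + h₂) k - dyadicDiffQuot F x h₁ k - dyadicDiffQuot F x h₂ k‖
      ≤ C / 4 * (‖h₁ + h₂‖ ^ 2 + ‖h₁ - h₂‖ ^ 2) * (1 / 2) ^ k := by
  set r : ℝ := ((2 : ℝ) ^ k)⁻¹
  have hmix := norm_mixedDiff_le hC x (r • h₁) (r • h₂)
  rw [← smul_add, ← smul_sub, norm_smul, norm_smul, mul_pow, mul_pow] at hmix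
  have hsplit : dyadicDiffQuot F x (h₁ + h₂) k - dyadicDiffQuot F x h₁ k - dyadicDiffQuot F x h₂ k
      = (2 : ℝ) ^ k • (F (x + r • (h₁ + h₂)) - F (x + r • h₁) - F (x + r • h₂) + F x) := by
    simp only [dyadicDiffQuot, r]; module
  rw [hsplit, norm_smul]
  calc _ ≤ ‖(2 : ℝ) ^ k‖ * (C / 4 * (‖r‖ ^ 2 * ‖h₁ + h₂‖ ^ 2 + ‖r‖ ^ 2 * ‖h₁ - h₂‖ ^ 2)) := by
        gcongr
    _ = _ := by
      simp only [r, norm_inv, norm_pow, Real.norm_ofNat, one_div, inv_pow]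
      field_simp

theorem lipschitzWith_dyadicDiffQuot {F : X → Y} {L : ℝ≥0} (hF : LipschitzWith L F) (x : X)
    (k : ℕ) : LipschitzWith L (fun h => dyadicDiffQuot F x h k) := by
  refine LipschitzWith.of_dist_le_mul fun h h' => ?_
  have := hF.dist_le_mul (x + ((2 : ℝ) ^ k)⁻¹ • h) (x + ((2 : ℝ) ^ k)⁻¹ • h')
  rw [dist_add_left, dist_smul₀, norm_inv, norm_pow, Real.norm_ofNat] at this
  simp only [dyadicDiffQuot]
  rw [dist_smul₀, dist_sub_right, norm_pow, Real.norm_ofNat]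
  calc _ ≤ (2 : ℝ) ^ k * (L * (((2 : ℝ) ^ k)⁻¹ * dist h h')) := by gcongr
    _ = _ := by field_simp

theorem differentiable_of_norm_secondDiff_le [CompleteSpace Y] {F : X → Y} {L : ℝ≥0}
    (hF : LipschitzWith L F) {C : ℝ}
    (hC : ∀ z h, ‖F (z + h) + F (z - h) - 2 • F z‖ ≤ C * ‖h‖ ^ 2) : Differentiable ℝ F := by
  intro x
  have hgeom : Tendsto (fun k : ℕ => ((1 : ℝ) / 2) ^ k) atTop (𝓝 0) :=
    tendsto_pow_atTop_nhds_zero_of_lt_one (by norm_num) (by norm_num)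
  choose D hD using fun h => cauchySeq_tendsto_of_complete
    (cauchySeq_of_le_geometric (1 / 2) _ (by norm_num) (dist_dyadicDiffQuot_succ_le hC x h))
  have herr : ∀ h, ‖F (x + h) - F x - D h‖ ≤ C / 2 * ‖h‖ ^ 2 := fun h => by
    have := dist_le_of_le_geometric_of_tendsto₀ _ _ (by norm_num)
      (dist_dyadicDiffQuot_succ_le hC x h) (hD h)
    have h0 : dyadicDiffQuot F x h 0 = F (x + h) - F x := by simp [dyadicDiffQuot]
    rw [dist_eq_norm, h0] at this
    exact this.trans_eq (by ring)
  have hadd : ∀ h₁ h₂, D (h₁ + h₂) = D h₁ + D h₂ := fun h₁ h₂ => by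
    have hlim := ((hD (h₁ + h₂)).sub (hD h₁)).sub (hD h₂)
    have hzero := squeeze_zero_norm (norm_dyadicDiffQuot_add_sub_le hC x h₁ h₂)
      (by simpa using hgeom.const_mul (C / 4 * (‖h₁ + h₂‖ ^ 2 + ‖h₁ - h₂‖ ^ 2)))
    rw [← sub_eq_zero, ← sub_sub]
    exact tendsto_nhds_unique hlim hzero
  have hlip : LipschitzWith L D := LipschitzWith.of_dist_le_mul fun h h' =>
    le_of_tendsto_of_tendsto' ((hD h).dist (hD h')) tendsto_const_nhds
      fun k => (lipschitzWith_dyadicDiffQuot hF x k).dist_le_mul h h'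
  refine ⟨AddMonoidHom.toRealLinearMap (AddMonoidHom.mk' D hadd) hlip.continuous, ?_⟩
  rw [hasFDerivAt_iff_isLittleO_nhds_zero]
  refine (IsBigO.of_bound (C / 2) (Eventually.of_forall fun h => ?_)).trans_isLittleO
    (isLittleO_norm_pow_id one_lt_two)
  simpa [AddMonoidHom.toRealLinearMap] using herr h

end SecondDifference

theorem pow_one_add_sub_pow_one_sub_le (n : ℕ) {t : ℝ} (h₀ : 0 ≤ t) (h₁ : t ≤ 1) :
    (1 + t) ^ n - (1 - t) ^ n ≤ n * 2 ^ n * t := by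
  rcases n with _ | n
  · simp
  have hmax : max |1 + t| |1 - t| ≤ 2 := by
    rw [abs_of_nonneg (by linarith), abs_of_nonneg (by linarith)]
    exact max_le (by linarith) (by linarith)
  calc (1 + t) ^ (n + 1) - (1 - t) ^ (n + 1)
      ≤ |(1 + t) - (1 - t)| * (n + 1 : ℕ) * max |1 + t| |1 - t| ^ n :=
        (le_abs_self _).trans (abs_pow_sub_pow_le _ _ _)
    _ ≤ (2 * t) * (n + 1 : ℕ) * 2 ^ n := by
        rw [show (1 + t) - (1 - t) = 2 * t by ring, abs_of_nonneg (by linarith)]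
        gcongr
    _ = _ := by ring

theorem norm_setIntegral_sub_setIntegral_le {V W : Type*} [MeasurableSpace V]
    [NormedAddCommGroup W] [NormedSpace ℝ W] {ν : Measure V} {s t : Set V}
    (hs : MeasurableSet s) (ht : MeasurableSet t) (hst : ν (symmDiff s t) ≠ ⊤) {h : V → W}
    (hhs : IntegrableOn h s ν) (hht : IntegrableOn h t ν) {M : ℝ} (hM : ∀ v ∈ symmDiff s t, ‖h v‖ ≤ M) :
    ‖∫ v in s, h v ∂ν - ∫ v in t, h v ∂ν‖ ≤ M * ν.real (symmDiff s t) := by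
  rw [← integral_indicator hs, ← integral_indicator ht,
    ← integral_sub (hhs.integrable_indicator hs) (hht.integrable_indicator ht)]
  have hbound : ∀ v,
      ‖s.indicator h v - t.indicator h v‖ ≤ (symmDiff s t).indicator (fun _ => M) v := by
    intro v
    by_cases hvs : v ∈ s <;> by_cases hvt : v ∈ t
    · simp [hvs, hvt, Set.mem_symmDiff]
    · simpa [hvs, hvt, Set.mem_symmDiff] using hM v (by simp [Set.mem_symmDiff, hvs, hvt])
    · simpa [hvs, hvt, Set.mem_symmDiff] using hM v (by simp [Set.mem_symmDiff, hvs, hvt])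
    · simp [hvs, hvt, Set.mem_symmDiff]
  calc _ ≤ ∫ v, (symmDiff s t).indicator (fun _ => M) v ∂ν :=
        norm_integral_le_of_norm_le ((integrable_indicator_iff (hs.symmDiff ht)).2
          (integrableOn_const hst)) (.of_forall hbound)
    _ = _ := by rw [integral_indicator_const _ (hs.symmDiff ht), smul_eq_mul, mul_comm]

theorem symmDiff_closedBall_subset {V : Type*} [NormedAddCommGroup V] (a : V) (r : ℝ) :
    symmDiff (closedBall a r) (closedBall 0 r)
      ⊆ closedBall 0 (r + ‖a‖) \ closedBall 0 (r - ‖a‖) := by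
  intro v hv
  simp only [Set.mem_symmDiff, mem_closedBall, dist_eq_norm, sub_zero] at hv
  simp only [Set.mem_sdiff, mem_closedBall, dist_eq_norm, sub_zero, not_le]
  have h₁ := norm_sub_le v a
  have h₂ := norm_le_norm_add_norm_sub' v a
  rcases hv with ⟨hin, hout⟩ | ⟨hin, hout⟩ <;> constructor <;> linarith [norm_sub_rev v a]

theorem setIntegral_closedBall_comp_add_right {V W : Type*} [NormedAddCommGroup V]
    [MeasurableSpace V] [MeasurableAdd V] [NormedAddCommGroup W] [NormedSpace ℝ W]
    (ν : Measure V) [ν.IsAddRightInvariant] (g : V → W) (a : V) (r : ℝ) :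
    ∫ u in closedBall 0 r, g (u + a) ∂ν = ∫ v in closedBall a r, g v ∂ν := by
  have hpre : (· + a) ⁻¹' closedBall a r = closedBall (0 : V) r := by
    ext u; simp [dist_eq_norm]
  rw [← hpre]
  exact (measurePreserving_add_right ν a).setIntegral_preimage_emb
    (measurableEmbedding_addRight a) g _

section BallIntegral

variable {V W : Type*} [NormedAddCommGroup V] [NormedSpace ℝ V] [MeasurableSpace V]
  [BorelSpace V] [FiniteDimensional ℝ V] (ν : Measure V) [ν.IsAddHaarMeasure]
  [NormedAddCommGroup W] [NormedSpace ℝ W]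

open Module

theorem measureReal_closedBall_diff_closedBall_le {t : ℝ} (h₀ : 0 ≤ t) (h₁ : t ≤ 1) :
    ν.real (closedBall (0 : V) (1 + t) \ closedBall 0 (1 - t))
      ≤ finrank ℝ V * 2 ^ finrank ℝ V * t * ν.real (closedBall (0 : V) 1) := by
  rw [measureReal_sdiff (closedBall_subset_closedBall (by linarith)) measurableSet_closedBall
      measure_closedBall_lt_top.ne, Measure.addHaar_real_closedBall' ν 0 (r := 1 + t) (by linarith),
    Measure.addHaar_real_closedBall' ν 0 (r := 1 - t) (by linarith),
    ← sub_mul]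
  gcongr
  exact pow_one_add_sub_pow_one_sub_le _ h₀ h₁

theorem norm_setIntegral_closedBall_secondDiff_le {g : V → W} {K : ℝ≥0} (hg : LipschitzWith K g)
    {a : V} (ha : ‖a‖ ≤ 1) :
    ‖∫ u in closedBall 0 1, g (u + a) ∂ν + ∫ u in closedBall 0 1, g (u - a) ∂ν
        - 2 • ∫ u in closedBall 0 1, g u ∂ν‖
      ≤ K * finrank ℝ V * 2 ^ finrank ℝ V * ‖a‖ ^ 2 * ν.real (closedBall (0 : V) 1) := by
  set k : V → W := fun v => g v - g (v - a)
  have hk : Continuous k := hg.continuous.sub (hg.continuous.comp (continuous_sub_right a))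
  have hint : ∀ c : V, IntegrableOn k (closedBall c 1) ν := fun c =>
    hk.continuousOn.integrableOn_compact (isCompact_closedBall c 1)
  have hshift : ∫ u in closedBall 0 1, g (u + a) ∂ν + ∫ u in closedBall 0 1, g (u - a) ∂ν
        - 2 • ∫ u in closedBall 0 1, g u ∂ν
      = ∫ v in closedBall a 1, k v ∂ν - ∫ v in closedBall 0 1, k v ∂ν := by
    have hg' : ∀ c : V, IntegrableOn g (closedBall c 1) ν := fun c =>
      hg.continuous.continuousOn.integrableOn_compact (isCompact_closedBall c 1)
    have hga : ∀ c : V, IntegrableOn (fun v => g (v - a)) (closedBall c 1) ν := fun c =>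
      (hg.continuous.comp (continuous_sub_right a)).continuousOn.integrableOn_compact
        (isCompact_closedBall c 1)
    rw [integral_sub (hg' a) (hga a), integral_sub (hg' 0) (hga 0),
      ← setIntegral_closedBall_comp_add_right ν g a,
      ← setIntegral_closedBall_comp_add_right ν (fun v => g (v - a)) a]
    simp only [add_sub_cancel_right, two_smul]
    abel
  have hk_le : ∀ v, ‖k v‖ ≤ K * ‖a‖ := fun v => by
    simpa [k, dist_eq_norm] using hg.dist_le_mul v (v - a)
  rw [hshift]
  calc _ ≤ K * ‖a‖ * ν.real (symmDiff (closedBall a 1) (closedBall 0 1)) :=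
        norm_setIntegral_sub_setIntegral_le measurableSet_closedBall measurableSet_closedBall
          (measure_ne_top_of_subset (symmDiff_closedBall_subset a 1) 
            (measure_ne_top_of_subset Set.sdiff_subset measure_closedBall_lt_top.ne))
          (hint a) (hint 0) fun v _ => hk_le v
    _ ≤ K * ‖a‖ * ν.real (closedBall (0 : V) (1 + ‖a‖) \ closedBall 0 (1 - ‖a‖)) := by
        gcongr
        · exact measure_ne_top_of_subset Set.sdiff_subset measure_closedBall_lt_top.ne
        · exact symmDiff_closedBall_subset a 1
    _ ≤ K * ‖a‖ * (finrank ℝ V * 2 ^ finrank ℝ V * ‖a‖ * ν.real (closedBall (0 : V) 1)) := by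
        gcongr
        exact measureReal_closedBall_diff_closedBall_le ν (norm_nonneg a) ha
    _ = _ := by ring

end BallIntegral

section Smoothing

variable {dx dy : ℕ}

instance isProbabilityMeasure_uniformBall (n : ℕ) : IsProbabilityMeasure (uniformBall n) := by
  constructor
  rw [uniformBall, Measure.smul_apply, Measure.restrict_apply_univ, smul_eq_mul,
    ENNReal.inv_mul_cancel (measure_closedBall_pos volume 0 one_pos).ne'
      measure_closedBall_lt_top.ne]

theorem ae_mem_closedBall_uniformBall (n : ℕ) :
    ∀ᵐ u ∂(uniformBall n), u ∈ closedBall (0 : E n) 1 :=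
  Measure.ae_smul_measure (ae_restrict_mem measurableSet_closedBall) _

theorem ymu_eq_smul_setIntegral (y : E dx → E dy) (μ : ℝ) (x : E dx) :
    ymu y μ x = (volume.real (closedBall (0 : E dx) 1))⁻¹ •
      ∫ u in closedBall (0 : E dx) 1, y (x + μ • u) := by
  rw [ymu, uniformBall, integral_smul_measure, ENNReal.toReal_inv, measureReal_def]

theorem integrable_comp_add_smul_uniformBall {y : E dx → E dy} (hy : Continuous y) (μ : ℝ)
    (x : E dx) : Integrable (fun u => y (x + μ • u)) (uniformBall dx) := by
  refine Integrable.smul_measure ?_ (ENNReal.inv_ne_top.2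
    (measure_closedBall_pos volume 0 one_pos).ne')
  exact (hy.comp (continuous_const.add (continuous_const_smul μ))).continuousOn.integrableOn_compact
    (isCompact_closedBall _ _)

theorem lipschitzWith_ymu {y : E dx → E dy} {Ly : ℝ≥0} (hy : LipschitzWith Ly y) (μ : ℝ) :
    LipschitzWith Ly (ymu y μ) := by
  refine LipschitzWith.of_dist_le_mul fun x₁ x₂ => ?_
  rw [dist_eq_norm, ymu, ymu,
    ← integral_sub (integrable_comp_add_smul_uniformBall hy.continuous μ x₁)
      (integrable_comp_add_smul_uniformBall hy.continuous μ x₂)]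
  refine (norm_integral_le_of_norm_le_const (C := Ly * dist x₁ x₂)
    (.of_forall fun u => ?_)).trans_eq (by simp)
  simpa [dist_eq_norm] using hy.dist_le_mul (x₁ + μ • u) (x₂ + μ • u)

theorem norm_ymu_sub_le {y : E dx → E dy} {Ly : ℝ≥0} (hy : LipschitzWith Ly y) {μ : ℝ}
    (hμ : 0 ≤ μ) (x : E dx) : ‖ymu y μ x - y x‖ ≤ Ly * μ := by
  have hsub : ymu y μ x - y x = ∫ u, (y (x + μ • u) - y x) ∂(uniformBall dx) := by
    rw [integral_sub (integrable_comp_add_smul_uniformBall hy.continuous μ x)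
      (integrable_const _), integral_const, probReal_univ, one_smul, ymu]
  rw [hsub]
  refine (norm_integral_le_of_norm_le_const (C := Ly * μ) ?_).trans_eq (by simp)
  filter_upwards [ae_mem_closedBall_uniformBall dx] with u hu
  have hu' : ‖μ • u‖ ≤ μ := by
    rw [norm_smul, Real.norm_of_nonneg hμ]
    exact mul_le_of_le_one_right hμ (mem_closedBall_zero_iff.1 hu)
  calc ‖y (x + μ • u) - y x‖ ≤ Ly * ‖μ • u‖ := by
        simpa [dist_eq_norm] using hy.dist_le_mul (x + μ • u) x
    _ ≤ Ly * μ := by gcongr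

theorem ymu_add_eq_smul_setIntegral (y : E dx → E dy) {μ : ℝ} (hμ : μ ≠ 0) (x z : E dx) :
    ymu y μ (x + z) = (volume.real (closedBall (0 : E dx) 1))⁻¹ •
      ∫ u in closedBall (0 : E dx) 1, y (x + μ • (u + μ⁻¹ • z)) := by
  rw [ymu_eq_smul_setIntegral]
  congr 1
  refine setIntegral_congr_fun measurableSet_closedBall fun u _ => ?_
  rw [smul_add, smul_smul, mul_inv_cancel₀ hμ, one_smul, add_comm (μ • u), add_assoc]

theorem norm_ymu_secondDiff_le_of_norm_le {y : E dx → E dy} {Ly : ℝ≥0} (hy : LipschitzWith Ly y)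
    {μ : ℝ} (hμ : 0 < μ) (x : E dx) {h : E dx} (hh : ‖h‖ ≤ μ) :
    ‖ymu y μ (x + h) + ymu y μ (x - h) - 2 • ymu y μ x‖ ≤ Ly * (dx * 2 ^ dx) / μ * ‖h‖ ^ 2 := by
  set c := volume.real (closedBall (0 : E dx) 1)
  have hc : 0 < c := ENNReal.toReal_pos (measure_closedBall_pos volume 0 one_pos).ne'
    measure_closedBall_lt_top.ne
  have hΨ : LipschitzWith (Ly * ‖μ‖₊) fun v => y (x + μ • v) :=
    LipschitzWith.of_dist_le_mul fun v w => by
      simpa [dist_smul₀, mul_assoc] using hy.dist_le_mul (x + μ • v) (x + μ • w)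
  have ha : ‖μ⁻¹ • h‖ = ‖h‖ / μ := by
    rw [norm_smul, norm_inv, Real.norm_of_nonneg hμ.le, inv_mul_eq_div]
  have hbound := norm_setIntegral_closedBall_secondDiff_le volume hΨ
    (ha.trans_le ((div_le_one hμ).2 hh))
  rw [finrank_euclideanSpace_fin, ha, NNReal.coe_mul, coe_nnnorm, Real.norm_of_nonneg hμ.le]
    at hbound
  have hminus := ymu_add_eq_smul_setIntegral y hμ.ne' x (-h)
  have hzero := ymu_add_eq_smul_setIntegral y hμ.ne' x 0
  simp only [smul_neg, ← sub_eq_add_neg] at hminus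
  simp only [add_zero, smul_zero] at hzero
  rw [ymu_add_eq_smul_setIntegral y hμ.ne' x h, hminus, hzero, ← smul_add, ← smul_comm,
    ← smul_sub, norm_smul, Real.norm_of_nonneg (inv_nonneg.2 hc.le)]
  calc _ ≤ c⁻¹ * (Ly * μ * dx * 2 ^ dx * (‖h‖ / μ) ^ 2 * c) := by gcongr
    _ = _ := by field_simp

theorem norm_ymu_secondDiff_le {y : E dx → E dy} {Ly : ℝ≥0} (hy : LipschitzWith Ly y) {μ : ℝ}
    (hμ : 0 < μ) (x h : E dx) :
    ‖ymu y μ (x + h) + ymu y μ (x - h) - 2 • ymu y μ x‖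
      ≤ Ly * (dx * 2 ^ dx + 2) / μ * ‖h‖ ^ 2 := by
  have hquad : 0 ≤ Ly * 2 / μ * ‖h‖ ^ 2 := by positivity
  rcases le_or_gt ‖h‖ μ with hsmall | hlarge
  · refine (norm_ymu_secondDiff_le_of_norm_le hy hμ x hsmall).trans ?_
    rw [mul_add, add_div, add_mul]
    exact le_add_of_nonneg_right hquad
  · refine ((lipschitzWith_ymu hy μ).norm_secondDiff_le x h).trans ?_
    have hlin : (2 * Ly * ‖h‖ : ℝ) ≤ Ly * 2 / μ * ‖h‖ ^ 2 := by
      rw [div_mul_eq_mul_div, le_div_iff₀ hμ]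
      have : (Ly : ℝ) * ‖h‖ * μ ≤ Ly * ‖h‖ * ‖h‖ := by gcongr
      linear_combination 2 * this
    have : 0 ≤ Ly * (dx * 2 ^ dx) / μ * ‖h‖ ^ 2 := by positivity
    rw [mul_add, add_div, add_mul]
    linarith

theorem differentiable_ymu {y : E dx → E dy} {Ly : ℝ≥0} (hy : LipschitzWith Ly y)
    {μ : ℝ} (hμ : 0 < μ) : Differentiable ℝ (ymu y μ) :=
  differentiable_of_norm_secondDiff_le (lipschitzWith_ymu hy μ) (norm_ymu_secondDiff_le hy hμ)

end Smoothing

section Gradient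

open InnerProductSpace

theorem gradient_comp_prodMk {X Y : Type*} [NormedAddCommGroup X] [InnerProductSpace ℝ X]
    [CompleteSpace X] [NormedAddCommGroup Y] [NormedSpace ℝ Y] {f : X × Y → ℝ} {g : X → Y}
    {x : X} (hf : DifferentiableAt ℝ f (x, g x)) (hg : DifferentiableAt ℝ g x) :
    gradient (fun x' => f (x', g x')) x
      = (toDual ℝ X).symm ((fderiv ℝ f (x, g x)).comp
          ((ContinuousLinearMap.id ℝ X).prod (fderiv ℝ g x))) := by
  have h : HasFDerivAt (fun x' => f (x', g x'))
      ((fderiv ℝ f (x, g x)).comp ((ContinuousLinearMap.id ℝ X).prod (fderiv ℝ g x))) x :=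
    hf.hasFDerivAt.comp x ((hasFDerivAt_id x).prodMk hg.hasFDerivAt)
  rw [gradient, h.fderiv]

theorem gradx_add_adjoint_grady {dx dy : ℕ} {f : E dx × E dy → ℝ} {x : E dx} {y : E dy}
    (hf : DifferentiableAt ℝ f (x, y)) (J : E dx →L[ℝ] E dy) :
    gradx f x y + J.adjoint (grady f x y)
      = (toDual ℝ (E dx)).symm
          ((fderiv ℝ f (x, y)).comp ((ContinuousLinearMap.id ℝ _).prod J)) := by
  refine ext_inner_right ℝ fun v => ?_
  have hx : HasFDerivAt (fun x' => f (x', y))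
      ((fderiv ℝ f (x, y)).comp (ContinuousLinearMap.inl ℝ _ _)) x :=
    hf.hasFDerivAt.comp x (hasFDerivAt_prodMk_left x y)
  have hy : HasFDerivAt (fun y' => f (x, y'))
      ((fderiv ℝ f (x, y)).comp (ContinuousLinearMap.inr ℝ _ _)) y :=
    hf.hasFDerivAt.comp y (hasFDerivAt_prodMk_right x y)
  rw [inner_add_left, ContinuousLinearMap.adjoint_inner_left, gradx, grady, gradient, gradient,
    hx.fderiv, hy.fderiv, toDual_symm_apply, toDual_symm_apply, toDual_symm_apply]
  simp only [ContinuousLinearMap.comp_apply, ContinuousLinearMap.inl_apply,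
    ContinuousLinearMap.inr_apply, ContinuousLinearMap.prod_apply, ContinuousLinearMap.id_apply]
  rw [← map_add, Prod.mk_add_mk, add_zero, zero_add]

theorem ContinuousLinearMap.norm_id_prod_le {X Y : Type*} [NormedAddCommGroup X]
    [NormedSpace ℝ X] [NormedAddCommGroup Y] [NormedSpace ℝ Y] (J : X →L[ℝ] Y) :
    ‖(ContinuousLinearMap.id ℝ X).prod J‖ ≤ 1 + ‖J‖ := by
  rw [opNorm_prod, Prod.norm_def]
  exact max_le ((norm_id_le).trans (by simp)) (by simp)

end Gradient

/-- the bias of `ḡ(x) = ∇_x f(x, y*(x)) + Jac y_μ(x)ᵀ ∇_y f(x, y*(x))`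
relative to `∇F_μ(x)` is at most `L_g (1 + L_y) L_y μ`. -/
theorem stmt9 (dx dy : ℕ) (f : E dx × E dy → ℝ) (Lg : ℝ≥0)
    (hfdiff : Differentiable ℝ f)
    (hgradLip : ∀ p q : E dx × E dy, ‖fderiv ℝ f p - fderiv ℝ f q‖ ≤ (Lg : ℝ) * ‖p - q‖)
    (ystar : E dx → E dy) (Ly : ℝ≥0) (hLip : LipschitzWith Ly ystar)
    (μ : ℝ) (hμ : 0 < μ) (x : E dx) :
    ‖(gradx f x (ystar x)
        + (ContinuousLinearMap.adjoint (fderiv ℝ (ymu ystar μ) x)) (grady f x (ystar x)))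
      - gradient (Fmu f ystar μ) x‖
      ≤ (Lg : ℝ) * (1 + (Ly : ℝ)) * (Ly : ℝ) * μ := by
  have hfderiv : ‖fderiv ℝ f (x, ystar x) - fderiv ℝ f (x, ymu ystar μ x)‖ ≤ Lg * (Ly * μ) := by
    refine (hgradLip _ _).trans ?_
    rw [Prod.mk_sub_mk, sub_self, Prod.norm_def, norm_zero, norm_sub_rev]
    gcongr
    exact (max_eq_right (norm_nonneg _)).trans_le (norm_ymu_sub_le hLip hμ.le x)
  have hJ : ‖fderiv ℝ (ymu ystar μ) x‖ ≤ Ly :=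
    norm_fderiv_le_of_lipschitz ℝ (lipschitzWith_ymu hLip μ)
  rw [gradx_add_adjoint_grady (hfdiff _),
    show Fmu f ystar μ = fun x' => f (x', ymu ystar μ x') from rfl,
    gradient_comp_prodMk (hfdiff _) (differentiable_ymu hLip hμ x), ← map_sub,
    LinearIsometryEquiv.norm_map, ← ContinuousLinearMap.sub_comp]
  calc _ ≤ _ := ContinuousLinearMap.opNorm_comp_le _ _
    _ ≤ Lg * (Ly * μ) * (1 + Ly) := by
        gcongr
        exact (ContinuousLinearMap.norm_id_prod_le _).trans (by gcongr)
    _ = _ := by ring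
end
end
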